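/- Let F(u,v) be the free group on u, v, let g : F(u,v) → Z ⋊ Z be the homomorphism with g(u) = (1,0), g(v) = (0,1), and for integers p, q define c_{p,q} : ker g → ker g by c_{p,q}(x) = v^p u^q x u^{-q} v^{-p}. Then c_{p,q} is a well-defined group automorphism of ker g, and for all integers k, l there exists η ∈ ker g such that c_{p,q}(B_{k,l}) = η · B_{k+p, l+(-1)^k q} · η⁻¹, where B_{k,l} = v^k u^l (u v u v⁻¹) u^{-l} v^{-k}. -/

import Mathlib

/-- The underlying set of the nontrivial semidirect product `ℤ ⋊ ℤ`
(the fundamental group of the Klein bottle). -/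
@[ext]
structure KB where
  a : ℤ
  b : ℤ

namespace KB

instance : Mul KB := ⟨fun x y => ⟨x.a + ((-1 : ℤˣ) ^ x.b : ℤˣ) * y.a, x.b + y.b⟩⟩
instance : One KB := ⟨⟨0, 0⟩⟩
instance : Inv KB := ⟨fun x => ⟨-(((-1 : ℤˣ) ^ x.b : ℤˣ) * x.a), -x.b⟩⟩

lemma mul_def (x y : KB) :
    x * y = ⟨x.a + ((-1 : ℤˣ) ^ x.b : ℤˣ) * y.a, x.b + y.b⟩ := rfl

lemma one_def : (1 : KB) = ⟨0, 0⟩ := rfl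

lemma inv_def (x : KB) :
    x⁻¹ = ⟨-(((-1 : ℤˣ) ^ x.b : ℤˣ) * x.a), -x.b⟩ := rfl

instance : Group KB :=
  Group.ofLeftAxioms
    (by
      rintro ⟨a, b⟩ ⟨c, d⟩ ⟨e, f⟩
      ext <;> simp [mul_def, zpow_add] <;> ring)
    (by rintro ⟨a, b⟩; ext <;> simp [mul_def, one_def])
    (by
      rintro ⟨a, b⟩
      ext <;> simp [mul_def, one_def, inv_def, zpow_neg])

end KB
namespace KleinBU

/-- Generator `u` of the free group `F(u,v)`. -/
def u : FreeGroup Bool := FreeGroup.of true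

/-- Generator `v` of the free group `F(u,v)`. -/
def v : FreeGroup Bool := FreeGroup.of false

/-- The homomorphism `g : F(u,v) → ℤ ⋊ ℤ` with `g u = (1,0)` and `g v = (0,1)`. -/
def g : FreeGroup Bool →* KB :=
  FreeGroup.lift (fun x => if x then ⟨1, 0⟩ else ⟨0, 1⟩)

/-- The element `B = u v u v⁻¹`. -/
def Bel : FreeGroup Bool := u * v * u * v⁻¹

/-- The element `B_{k,l} = v^k u^l B u^{-l} v^{-k}`. -/
def Bkl (k l : ℤ) : FreeGroup Bool := v ^ k * u ^ l * Bel * u ^ (-l) * v ^ (-k)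

end KleinBU

namespace KleinBU

lemma g_u : g u = ⟨1, 0⟩ := by simp [g, u]

lemma g_v : g v = ⟨0, 1⟩ := by simp [g, v]

lemma KB_u_pow (n : ℤ) : (⟨1, 0⟩ : KB) ^ n = ⟨n, 0⟩ := by
  induction n using Int.induction_on with
  | zero => rfl
  | succ n ih => rw [zpow_add_one, ih]; ext <;> simp [KB.mul_def] <;> ring
  | pred n ih => rw [zpow_sub_one, ih]; ext <;> simp [KB.mul_def, KB.inv_def] <;> ring

lemma KB_v_pow (n : ℤ) : (⟨0, 1⟩ : KB) ^ n = ⟨0, n⟩ := by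
  induction n using Int.induction_on with
  | zero => rfl
  | succ n ih => rw [zpow_add_one, ih]; ext <;> simp [KB.mul_def] <;> ring
  | pred n ih => rw [zpow_sub_one, ih]; ext <;> simp [KB.mul_def, KB.inv_def] <;> ring

end KleinBU

open KleinBU in
/-- For integers `p, q`, conjugation `x ↦ v^p u^q x u^{-q} v^{-p}` is a well-defined
automorphism `c_{p,q}` of `ker g`, and for all `k, l` there exists `η ∈ ker g` with
`c_{p,q}(B_{k,l}) = η · B_{k+p, l+(-1)^k q} · η⁻¹`. -/
theorem conj_aut_ker_g (p q : ℤ) :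
    ∃ c : MonoidHom.ker g ≃* MonoidHom.ker g,
      (∀ x : MonoidHom.ker g,
        (c x : FreeGroup Bool) = v ^ p * u ^ q * (x : FreeGroup Bool) * u ^ (-q) * v ^ (-p)) ∧
      ∀ k l : ℤ, ∃ η ∈ MonoidHom.ker g,
        v ^ p * u ^ q * Bkl k l * u ^ (-q) * v ^ (-p)
          = η * Bkl (k + p) (l + (((-1 : ℤˣ) ^ k : ℤˣ) : ℤ) * q) * η⁻¹ := by

  refine ⟨MulAut.conjNormal (v ^ p * u ^ q), fun x => ?_, fun k l => ?_⟩
  · rw [MulAut.conjNormal_apply]; group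
  · refine ⟨v ^ p * u ^ q * v ^ k * u ^ l *
        u ^ (-(l + (((-1 : ℤˣ) ^ k : ℤˣ) : ℤ) * q)) * v ^ (-(k + p)), ?_, ?_⟩
    · show g _ = 1
      simp only [map_mul, map_zpow, g_u, g_v, KB_u_pow, KB_v_pow, KB.mul_def, KB.one_def]
      ext <;> simp [zpow_add] <;> ring_nf <;> simp [← Units.val_pow_eq_pow_val, Int.units_sq]
    · simp only [Bkl, Bel]; group
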